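/- Let n ≥ 1, let E be a real inner product space, let M ⊆ E be nonempty, and let P : E → E be a nearest-point projection onto M satisfying ‖P z − P w‖ ≤ R · ‖z − w‖ for all z, w ∈ E, with R > 0. Let A be an n×n doubly stochastic matrix that is σ-contractive on mean-zero families with σ ≥ 0, and suppose ρ := σ R < 1. Let α ≥ 0, let v : ℕ → Fin n → E, and let x : ℕ → Fin n → E satisfy x (k+1) i = P((A·(x k)) i − α • (v k i)) for all k and i. Writing x̄ k := P((1/n) ∑_i x k i), it holds for every natural number K that ∑_{k=0}^{K} ∑_i ‖x k i − x̄ k‖² ≤ (2 α² R²/(1−ρ)²) · ∑_{k=0}^{K} ∑_i ‖v k i‖² + (2/(1−ρ²)) · ∑_i ‖x 0 i − x̄ 0‖². (The summed consensus-error bound, Eq. (41) in the paper's proof of its main theorem, with constants C̃₁ = 2/(1−ρ)² and C̃₂-type initial term.) -/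

import Mathlib

/-!
Write `e k` for the consensus error `∑ i, ‖x k i - P (mean (x k))‖ ^ 2`. The mean minimises
`c ↦ ∑ i, ‖y i - c‖ ^ 2`, and `P` is a nearest-point map, so `e (k + 1)` is at most
`∑ i, ‖x (k + 1) i - P (mean (x k))‖ ^ 2`. By the Lipschitz bound and the row sums of `A` this is at
most `R ^ 2` times the squared block norm of `A · (x k - mean (x k)) - α • v k`, and contraction
on mean-zero families gives `√(e (k + 1)) ≤ ρ √(e k) + |α| R ‖v k‖₂`. Squaring with the convexity
bound `(ρ a + c) ^ 2 ≤ ρ a ^ 2 + c ^ 2 / (1 - ρ)` gives a linear recursion for `e`, which is summed.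
-/

open Finset

lemma sq_mul_add_le {p : ℝ} (hp0 : 0 ≤ p) (hp1 : p < 1) (a c : ℝ) :
    (p * a + c) ^ 2 ≤ p * a ^ 2 + c ^ 2 / (1 - p) := by
  have h1p : 0 < 1 - p := by linarith
  -- convexity of `t ↦ t ^ 2` at `p * a + (1 - p) * (c / (1 - p))`, with its defect made explicit
  have hdefect : p * a ^ 2 + c ^ 2 / (1 - p) - (p * a + c) ^ 2
      = p * ((1 - p) * a - c) ^ 2 / (1 - p) := by
    field_simp; ring
  rw [← sub_nonneg, hdefect]; positivity

section

variable {ι E : Type*} [Fintype ι] [NormedAddCommGroup E] [InnerProductSpace ℝ E]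

noncomputable def blockMean (y : ι → E) : E := (Fintype.card ι : ℝ)⁻¹ • ∑ i, y i

noncomputable def consensusError (P : E → E) (y : ι → E) : ℝ :=
  ∑ i, ‖y i - P (blockMean y)‖ ^ 2

lemma consensusError_nonneg (P : E → E) (y : ι → E) : 0 ≤ consensusError P y := by
  unfold consensusError; positivity

lemma sum_sub_blockMean (y : ι → E) : ∑ i, (y i - blockMean y) = 0 := by
  rcases isEmpty_or_nonempty ι with hι | hι
  · simp
  · rw [sum_sub_distrib, sum_const, card_univ, blockMean, ← Nat.cast_smul_eq_nsmul ℝ, smul_smul,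
      mul_inv_cancel₀ (by positivity), one_smul, sub_self]

lemma sum_norm_sub_sq_eq (y : ι → E) (c : E) :
    ∑ i, ‖y i - c‖ ^ 2 =
      ∑ i, ‖y i - blockMean y‖ ^ 2 + Fintype.card ι * ‖blockMean y - c‖ ^ 2 := by
  have hsplit : ∀ i, ‖y i - c‖ ^ 2 = ‖y i - blockMean y‖ ^ 2
      + 2 * inner ℝ (y i - blockMean y) (blockMean y - c) + ‖blockMean y - c‖ ^ 2 := fun i => by
    rw [← norm_add_sq_real, sub_add_sub_cancel]
  simp only [hsplit, sum_add_distrib, ← mul_sum, ← sum_inner, sum_sub_blockMean, inner_zero_left,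
    mul_zero, add_zero, sum_const, card_univ, nsmul_eq_mul]

lemma sum_norm_sub_sq_le_of_norm_le (y : ι → E) {c d : E}
    (h : ‖blockMean y - c‖ ≤ ‖blockMean y - d‖) :
    ∑ i, ‖y i - c‖ ^ 2 ≤ ∑ i, ‖y i - d‖ ^ 2 := by
  rw [sum_norm_sub_sq_eq y c, sum_norm_sub_sq_eq y d]
  gcongr

lemma sum_norm_sub_blockMean_sq_le (y : ι → E) (c : E) :
    ∑ i, ‖y i - blockMean y‖ ^ 2 ≤ ∑ i, ‖y i - c‖ ^ 2 :=
  sum_norm_sub_sq_le_of_norm_le y (by simp)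

lemma sqrt_sum_norm_sub_smul_sq_le (a b : ι → E) (α : ℝ) :
    √(∑ i, ‖a i - α • b i‖ ^ 2) ≤ √(∑ i, ‖a i‖ ^ 2) + |α| * √(∑ i, ‖b i‖ ^ 2) := by
  have h := norm_sub_le (WithLp.toLp 2 a) (α • WithLp.toLp 2 b)
  simpa [norm_smul, PiLp.norm_eq_of_L2] using h

lemma sum_smul_sub_blockMean {A : ι → ι → ℝ} (hArow : ∀ i, ∑ j, A i j = 1) (y : ι → E) (i : ι) :
    ∑ j, A i j • y j - blockMean y = ∑ j, A i j • (y j - blockMean y) := by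
  simp only [smul_sub, sum_sub_distrib, ← sum_smul, hArow, one_smul]

lemma consensusError_comp_le {M : Set E} {P : E → E} {R : ℝ} (hPin : ∀ z, P z ∈ M)
    (hPnear : ∀ z : E, ∀ y ∈ M, ‖z - P z‖ ≤ ‖z - y‖)
    (hPlip : ∀ z w : E, ‖P z - P w‖ ≤ R * ‖z - w‖) (z : ι → E) (c : E) :
    consensusError P (fun i => P (z i)) ≤ R ^ 2 * ∑ i, ‖z i - c‖ ^ 2 :=
  calc consensusError P (fun i => P (z i))
      ≤ ∑ i, ‖P (z i) - P c‖ ^ 2 := sum_norm_sub_sq_le_of_norm_le _ (hPnear _ _ (hPin c))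
    _ ≤ ∑ i, (R * ‖z i - c‖) ^ 2 := by gcongr with i; exact hPlip _ _
    _ = R ^ 2 * ∑ i, ‖z i - c‖ ^ 2 := by simp only [mul_pow, mul_sum]

lemma sqrt_consensusError_step_le {M : Set E} {P : E → E} {R σ : ℝ} {A : ι → ι → ℝ}
    (hPin : ∀ z, P z ∈ M) (hPnear : ∀ z : E, ∀ y ∈ M, ‖z - P z‖ ≤ ‖z - y‖) (hR : 0 ≤ R)
    (hPlip : ∀ z w : E, ‖P z - P w‖ ≤ R * ‖z - w‖) (hArow : ∀ i, ∑ j, A i j = 1) (hσ : 0 ≤ σ)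
    (hcontr : ∀ v : ι → E, (∑ i, v i) = 0 →
      √(∑ i, ‖∑ j, A i j • v j‖ ^ 2) ≤ σ * √(∑ i, ‖v i‖ ^ 2))
    (α : ℝ) (y w : ι → E) :
    √(consensusError P (fun i => P (∑ j, A i j • y j - α • w i))) ≤
      σ * R * √(consensusError P y) + |α| * R * √(∑ i, ‖w i‖ ^ 2) := by
  set u : ι → E := fun j => y j - blockMean y
  have hmix : √(∑ i, ‖∑ j, A i j • y j - α • w i - blockMean y‖ ^ 2) ≤
      σ * √(consensusError P y) + |α| * √(∑ i, ‖w i‖ ^ 2) := by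
    have hcenter : ∀ i, ∑ j, A i j • y j - α • w i - blockMean y = ∑ j, A i j • u j - α • w i :=
      fun i => by rw [sub_right_comm, sum_smul_sub_blockMean hArow]
    calc √(∑ i, ‖∑ j, A i j • y j - α • w i - blockMean y‖ ^ 2)
        = √(∑ i, ‖∑ j, A i j • u j - α • w i‖ ^ 2) := by simp only [hcenter]
      _ ≤ √(∑ i, ‖∑ j, A i j • u j‖ ^ 2) + |α| * √(∑ i, ‖w i‖ ^ 2) :=
          sqrt_sum_norm_sub_smul_sq_le _ _ α
      _ ≤ σ * √(∑ j, ‖u j‖ ^ 2) + |α| * √(∑ i, ‖w i‖ ^ 2) := by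
          gcongr; exact hcontr u (sum_sub_blockMean y)
      _ ≤ σ * √(consensusError P y) + |α| * √(∑ i, ‖w i‖ ^ 2) := by
          gcongr; exact sum_norm_sub_blockMean_sq_le y _
  calc √(consensusError P (fun i => P (∑ j, A i j • y j - α • w i)))
      ≤ √(R ^ 2 * ∑ i, ‖∑ j, A i j • y j - α • w i - blockMean y‖ ^ 2) :=
        Real.sqrt_le_sqrt (consensusError_comp_le hPin hPnear hPlip _ _)
    _ = R * √(∑ i, ‖∑ j, A i j • y j - α • w i - blockMean y‖ ^ 2) := by
        rw [Real.sqrt_mul (sq_nonneg R), Real.sqrt_sq hR]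
    _ ≤ R * (σ * √(consensusError P y) + |α| * √(∑ i, ‖w i‖ ^ 2)) := by gcongr
    _ = σ * R * √(consensusError P y) + |α| * R * √(∑ i, ‖w i‖ ^ 2) := by ring

lemma consensusError_step_le {M : Set E} {P : E → E} {R σ : ℝ} {A : ι → ι → ℝ}
    (hPin : ∀ z, P z ∈ M) (hPnear : ∀ z : E, ∀ y ∈ M, ‖z - P z‖ ≤ ‖z - y‖) (hR : 0 ≤ R)
    (hPlip : ∀ z w : E, ‖P z - P w‖ ≤ R * ‖z - w‖) (hArow : ∀ i, ∑ j, A i j = 1) (hσ : 0 ≤ σ)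
    (hcontr : ∀ v : ι → E, (∑ i, v i) = 0 →
      √(∑ i, ‖∑ j, A i j • v j‖ ^ 2) ≤ σ * √(∑ i, ‖v i‖ ^ 2))
    (hρ : σ * R < 1) (α : ℝ) (y w : ι → E) :
    consensusError P (fun i => P (∑ j, A i j • y j - α • w i)) ≤
      σ * R * consensusError P y + α ^ 2 * R ^ 2 / (1 - σ * R) * ∑ i, ‖w i‖ ^ 2 := by
  have hw : 0 ≤ ∑ i, ‖w i‖ ^ 2 := by positivity
  calc consensusError P (fun i => P (∑ j, A i j • y j - α • w i))
      = √(consensusError P (fun i => P (∑ j, A i j • y j - α • w i))) ^ 2 :=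
        (Real.sq_sqrt (consensusError_nonneg _ _)).symm
    _ ≤ (σ * R * √(consensusError P y) + |α| * R * √(∑ i, ‖w i‖ ^ 2)) ^ 2 := by
        gcongr
        exact sqrt_consensusError_step_le hPin hPnear hR hPlip hArow hσ hcontr α y w
    _ ≤ σ * R * √(consensusError P y) ^ 2 + (|α| * R * √(∑ i, ‖w i‖ ^ 2)) ^ 2 / (1 - σ * R) :=
        sq_mul_add_le (mul_nonneg hσ hR) hρ _ _
    _ = σ * R * consensusError P y + α ^ 2 * R ^ 2 / (1 - σ * R) * ∑ i, ‖w i‖ ^ 2 := by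
        rw [mul_pow, mul_pow, sq_abs, Real.sq_sqrt (consensusError_nonneg _ _), Real.sq_sqrt hw]
        ring

end

lemma one_sub_mul_sum_range_succ_le {e d : ℕ → ℝ} {ρ : ℝ} (hρ : 0 ≤ ρ) (he : ∀ k, 0 ≤ e k)
    (hstep : ∀ k, e (k + 1) ≤ ρ * e k + d k) (K : ℕ) :
    (1 - ρ) * ∑ k ∈ range (K + 1), e k ≤ e 0 + ∑ k ∈ range K, d k := by
  have hsteps : ∑ k ∈ range K, e (k + 1) ≤ ρ * ∑ k ∈ range K, e k + ∑ k ∈ range K, d k := by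
    rw [mul_sum, ← sum_add_distrib]; exact sum_le_sum fun k _ => hstep k
  have hshift := sum_range_succ' e K
  have hlast := sum_range_succ e K
  nlinarith [mul_nonneg hρ (he K)]

lemma sum_range_succ_le_of_le_mul_add {e w : ℕ → ℝ} {ρ c : ℝ} (hρ0 : 0 ≤ ρ) (hρ1 : ρ < 1)
    (hc : 0 ≤ c) (he : ∀ k, 0 ≤ e k) (hw : ∀ k, 0 ≤ w k)
    (hstep : ∀ k, e (k + 1) ≤ ρ * e k + c / (1 - ρ) * w k) (K : ℕ) :
    ∑ k ∈ range (K + 1), e k ≤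
      2 * c / (1 - ρ) ^ 2 * ∑ k ∈ range (K + 1), w k + 2 / (1 - ρ ^ 2) * e 0 := by
  have h1ρ : 0 < 1 - ρ := by linarith
  have hsum := one_sub_mul_sum_range_succ_le hρ0 he hstep K
  have hw' : ∑ k ∈ range K, c / (1 - ρ) * w k ≤ c / (1 - ρ) * ∑ k ∈ range (K + 1), w k := by
    rw [← mul_sum]
    gcongr
    · exact fun k _ _ => hw k
    · exact K.le_succ
  have hcoef : c / (1 - ρ) ^ 2 ≤ 2 * c / (1 - ρ) ^ 2 := by gcongr; linarith
  have hcoef₀ : 1 / (1 - ρ) ≤ 2 / (1 - ρ ^ 2) := by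
    rw [div_le_div_iff₀ h1ρ (by nlinarith)]; nlinarith
  have he₀ := he 0
  have hW : 0 ≤ ∑ k ∈ range (K + 1), w k := sum_nonneg fun k _ => hw k
  calc ∑ k ∈ range (K + 1), e k
      ≤ (e 0 + c / (1 - ρ) * ∑ k ∈ range (K + 1), w k) / (1 - ρ) := by
        rw [le_div_iff₀ h1ρ]; linarith
    _ = c / (1 - ρ) ^ 2 * ∑ k ∈ range (K + 1), w k + 1 / (1 - ρ) * e 0 := by field_simp; ring
    _ ≤ 2 * c / (1 - ρ) ^ 2 * ∑ k ∈ range (K + 1), w k + 2 / (1 - ρ ^ 2) * e 0 := by gcongr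

theorem consensus_error_summed_bound_general
    {E : Type*} [NormedAddCommGroup E] [InnerProductSpace ℝ E]
    (n : ℕ)
    (M : Set E)
    (P : E → E) (hPin : ∀ z, P z ∈ M)
    (hPnear : ∀ z : E, ∀ y ∈ M, ‖z - P z‖ ≤ ‖z - y‖)
    (R : ℝ) (hR : 0 < R)
    (hPlip : ∀ z w : E, ‖P z - P w‖ ≤ R * ‖z - w‖)
    (A : Fin n → Fin n → ℝ)
    (hArow : ∀ i, ∑ j, A i j = 1)
    (σ : ℝ) (hσ : 0 ≤ σ)
    (hcontr : ∀ v : Fin n → E, (∑ i, v i) = 0 →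
      Real.sqrt (∑ i, ‖∑ j, A i j • v j‖ ^ 2) ≤ σ * Real.sqrt (∑ i, ‖v i‖ ^ 2))
    (hρ : σ * R < 1)
    (α : ℝ)
    (v : ℕ → Fin n → E)
    (x : ℕ → Fin n → E)
    (hx : ∀ k i, x (k + 1) i = P ((∑ j, A i j • x k j) - α • v k i))
    (xbar : ℕ → E)
    (hxbar : ∀ k, xbar k = P ((n : ℝ)⁻¹ • ∑ i, x k i)) :
    ∀ K : ℕ, ∑ k ∈ Finset.range (K + 1), ∑ i, ‖x k i - xbar k‖ ^ 2 ≤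
      (2 * α ^ 2 * R ^ 2 / (1 - σ * R) ^ 2) *
          ∑ k ∈ Finset.range (K + 1), ∑ i, ‖v k i‖ ^ 2
        + (2 / (1 - (σ * R) ^ 2)) * ∑ i, ‖x 0 i - xbar 0‖ ^ 2 := by
  intro K
  have herr : ∀ k, ∑ i, ‖x k i - xbar k‖ ^ 2 = consensusError P (x k) := fun k => by
    simp [consensusError, blockMean, hxbar k]
  have hstep : ∀ k, consensusError P (x (k + 1)) ≤
      σ * R * consensusError P (x k) + α ^ 2 * R ^ 2 / (1 - σ * R) * ∑ i, ‖v k i‖ ^ 2 :=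
    fun k => by
      rw [show x (k + 1) = _ from funext (hx k)]
      exact consensusError_step_le hPin hPnear hR.le hPlip hArow hσ hcontr hρ α (x k) (v k)
  simp only [herr]
  rw [mul_assoc 2 (α ^ 2)]
  exact sum_range_succ_le_of_le_mul_add (mul_nonneg hσ hR.le) hρ (by positivity)
    (fun k => consensusError_nonneg P (x k)) (fun k => by positivity) hstep K

/-- Summed consensus-error bound (Eq. (41) in the paper's main-theorem proof):
under the projected consensus iteration `x (k+1) i = P((A·x k) i - α • v k i)`
with `ρ = σ R < 1`,
`∑_{k=0}^{K} ∑_i ‖x k i - x̄ k‖² ≤ (2α²R²/(1-ρ)²) ∑_{k=0}^{K} ∑_i ‖v k i‖²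
  + (2/(1-ρ²)) ∑_i ‖x 0 i - x̄ 0‖²`. -/
theorem consensus_error_summed_bound
    {E : Type*} [NormedAddCommGroup E] [InnerProductSpace ℝ E]
    (n : ℕ) (hn : 1 ≤ n)
    (M : Set E) (hM : M.Nonempty)
    (P : E → E) (hPin : ∀ z, P z ∈ M)
    (hPnear : ∀ z : E, ∀ y ∈ M, ‖z - P z‖ ≤ ‖z - y‖)
    (R : ℝ) (hR : 0 < R)
    (hPlip : ∀ z w : E, ‖P z - P w‖ ≤ R * ‖z - w‖)
    (A : Fin n → Fin n → ℝ)
    (hA0 : ∀ i j, 0 ≤ A i j)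
    (hArow : ∀ i, ∑ j, A i j = 1)
    (hAcol : ∀ j, ∑ i, A i j = 1)
    (σ : ℝ) (hσ : 0 ≤ σ)
    (hcontr : ∀ v : Fin n → E, (∑ i, v i) = 0 →
      Real.sqrt (∑ i, ‖∑ j, A i j • v j‖ ^ 2) ≤ σ * Real.sqrt (∑ i, ‖v i‖ ^ 2))
    (hρ : σ * R < 1)
    (α : ℝ) (hα : 0 ≤ α)
    (v : ℕ → Fin n → E)
    (x : ℕ → Fin n → E)
    (hx : ∀ k i, x (k + 1) i = P ((∑ j, A i j • x k j) - α • v k i))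
    (xbar : ℕ → E)
    (hxbar : ∀ k, xbar k = P ((n : ℝ)⁻¹ • ∑ i, x k i)) :
    ∀ K : ℕ, ∑ k ∈ Finset.range (K + 1), ∑ i, ‖x k i - xbar k‖ ^ 2 ≤
      (2 * α ^ 2 * R ^ 2 / (1 - σ * R) ^ 2) *
          ∑ k ∈ Finset.range (K + 1), ∑ i, ‖v k i‖ ^ 2
        + (2 / (1 - (σ * R) ^ 2)) * ∑ i, ‖x 0 i - xbar 0‖ ^ 2 :=
  consensus_error_summed_bound_general n M P hPin hPnear R hR hPlip A hArow σ hσ hcontr hρ α v x hx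
    xbar hxbar
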